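/- arXiv:2508.00365 — 3 statements merged into one kernel-verified Lean document; each statement's English description precedes it below -/
import Mathlib

section
/- Let L > 0 be a real number and let S be a finite subset of the closed interval [0, L]. Let 0 = t₀ ≤ t₁ ≤ … ≤ t_k ≤ t_{k+1} = L be the sorted list of the elements of S together with 0 and L, and let G = max_{0 ≤ r ≤ k} (t_{r+1} − t_r) be the largest gap. Then the minimum of x + (L − y) over all pairs (x, y) ∈ [0, L] × [0, L] such that every s ∈ S satisfies s ≤ x or y ≤ s, equals L − G. -/
/-!
If `y ≤ x` the cost `x + (L - y)` is already at least `L`. If `x < y`, the sorted points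
`0 = t₀ ≤ … ≤ t_{k+1} = L` contain a consecutive pair `t_r ≤ x < t_{r+1}`; since every point
of `S` lies outside `(x, y)`, also `y ≤ t_{r+1}`, so the untraversed length `y - x` is at most
the gap `t_{r+1} - t_r ≤ G`. Conversely, leaving exactly a largest gap untraversed covers all
points, because the list is sorted.
-/

/-- The sorted list `0 = t₀ ≤ t₁ ≤ … ≤ t_k ≤ t_{k+1} = L` of the elements of `S`
together with `0` and `L`. -/
noncomputable def sortedSegPoints (L : ℝ) (S : Finset ℝ) : List ℝ :=
  (insert (0 : ℝ) (insert L S)).sort (· ≤ ·)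

/-- The largest gap `G = max_{0 ≤ r ≤ k} (t_{r+1} − t_r)` between consecutive elements of
the sorted list of `S ∪ {0, L}`. -/
noncomputable def largestGap (L : ℝ) (S : Finset ℝ) : ℝ :=
  (((sortedSegPoints L S).zip (sortedSegPoints L S).tail).map
    (fun p => p.2 - p.1)).foldr max 0

namespace List

variable {α : Type*}

theorem exists_eq_append_of_mem_consecutivePairs {l : List α} {p : α × α}
    (h : p ∈ l.consecutivePairs) : ∃ l₁ l₂, l = l₁ ++ p.1 :: p.2 :: l₂ := by
  induction l with
  | nil => simp [consecutivePairs] at h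
  | cons a l ih =>
    cases l with
    | nil => simp [consecutivePairs] at h
    | cons b l =>
      rcases mem_cons.mp h with rfl | h
      · exact ⟨[], l, rfl⟩
      · obtain ⟨l₁, l₂, hl⟩ := ih h
        exact ⟨a :: l₁, l₂, by rw [hl, cons_append]⟩

theorem fst_mem_of_mem_consecutivePairs {l : List α} {p : α × α}
    (h : p ∈ l.consecutivePairs) : p.1 ∈ l :=
  (of_mem_zip h).1

theorem snd_mem_of_mem_consecutivePairs {l : List α} {p : α × α}
    (h : p ∈ l.consecutivePairs) : p.2 ∈ l :=
  mem_of_mem_tail (of_mem_zip h).2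

theorem Pairwise.rel_of_mem_consecutivePairs {R : α → α → Prop} {l : List α} {p : α × α}
    (hl : l.Pairwise R) (hp : p ∈ l.consecutivePairs) : R p.1 p.2 := by
  obtain ⟨l₁, l₂, rfl⟩ := exists_eq_append_of_mem_consecutivePairs hp
  simp_all [pairwise_append]

variable [LinearOrder α]

theorem Pairwise.le_or_le_of_mem_consecutivePairs {l : List α} {p : α × α}
    (hl : l.Pairwise (· ≤ ·)) (hp : p ∈ l.consecutivePairs) {t : α} (ht : t ∈ l) :
    t ≤ p.1 ∨ p.2 ≤ t := by
  obtain ⟨l₁, l₂, rfl⟩ := exists_eq_append_of_mem_consecutivePairs hp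
  simp only [pairwise_append, pairwise_cons, mem_append, mem_cons] at hl ht
  grind

theorem Pairwise.exists_mem_consecutivePairs_le_lt {l : List α} (hl : l.Pairwise (· ≤ ·))
    {a b x : α} (ha : a ∈ l) (hax : a ≤ x) (hb : b ∈ l) (hxb : x < b) :
    ∃ p ∈ l.consecutivePairs, p.1 ≤ x ∧ x < p.2 := by
  induction l generalizing a with
  | nil => simp at ha
  | cons c l ih =>
    have hcx : c ≤ x := by
      rcases mem_cons.mp ha with rfl | ha
      · exact hax
      · exact (rel_of_pairwise_cons hl ha).trans hax
    have hbl : b ∈ l := (mem_cons.mp hb).resolve_left (by rintro rfl; exact hxb.not_ge hcx)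
    cases l with
    | nil => simp at hbl
    | cons d l =>
      by_cases hdx : d ≤ x
      · obtain ⟨p, hp, hpx⟩ := ih hl.of_cons mem_cons_self hdx hbl
        exact ⟨p, mem_cons_of_mem _ hp, hpx⟩
      · exact ⟨(c, d), mem_cons_self, hcx, not_le.mp hdx⟩

theorem foldr_max_mem_cons (b : α) (l : List α) : l.foldr max b ∈ b :: l := by
  induction l with
  | nil => simp
  | cons a l ih =>
    rw [foldr_cons]
    rcases max_choice a (l.foldr max b) with h | h <;> rw [h]
    · exact mem_cons_of_mem _ mem_cons_self
    · rcases mem_cons.mp ih with h' | h'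
      · rw [h']; exact mem_cons_self
      · exact mem_cons_of_mem _ (mem_cons_of_mem _ h')

theorem foldr_max_mem {l : List α} {b : α} (hl : l ≠ []) (hb : ∀ x ∈ l, b ≤ x) :
    l.foldr max b ∈ l := by
  rcases mem_cons.mp (foldr_max_mem_cons b l) with h | h
  · obtain ⟨x, hx⟩ := exists_mem_of_ne_nil l hl
    have hxb : x ≤ b := h ▸ le_max_of_le' b hx le_rfl
    rwa [h, ← le_antisymm hxb (hb x hx)]
  · exact h

end List

section SegmentPoints

variable {L : ℝ} {S : Finset ℝ}

theorem mem_sortedSegPoints {t : ℝ} : t ∈ sortedSegPoints L S ↔ t = 0 ∨ t = L ∨ t ∈ S := by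
  rw [sortedSegPoints, Finset.mem_sort, Finset.mem_insert, Finset.mem_insert]

theorem zero_mem_sortedSegPoints : 0 ∈ sortedSegPoints L S :=
  mem_sortedSegPoints.mpr (.inl rfl)

theorem self_mem_sortedSegPoints : L ∈ sortedSegPoints L S :=
  mem_sortedSegPoints.mpr (.inr (.inl rfl))

theorem pairwise_sortedSegPoints : (sortedSegPoints L S).Pairwise (· ≤ ·) :=
  Finset.pairwise_sort _ _

theorem mem_Icc_of_mem_sortedSegPoints (hL : 0 ≤ L) (hS : ∀ s ∈ S, s ∈ Set.Icc (0 : ℝ) L) :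
    ∀ t ∈ sortedSegPoints L S, t ∈ Set.Icc 0 L := by
  intro t ht
  rcases mem_sortedSegPoints.mp ht with rfl | rfl | ht
  · exact ⟨le_rfl, hL⟩
  · exact ⟨hL, le_rfl⟩
  · exact hS t ht

theorem sub_le_largestGap {p : ℝ × ℝ} (hp : p ∈ (sortedSegPoints L S).consecutivePairs) :
    p.2 - p.1 ≤ largestGap L S :=
  List.le_max_of_le' 0 (List.mem_map_of_mem hp) le_rfl

theorem exists_mem_consecutivePairs_sub_eq_largestGap (hL : 0 < L) :
    ∃ p ∈ (sortedSegPoints L S).consecutivePairs, p.2 - p.1 = largestGap L S := by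
  obtain ⟨q, hq, -⟩ := pairwise_sortedSegPoints.exists_mem_consecutivePairs_le_lt
    zero_mem_sortedSegPoints le_rfl self_mem_sortedSegPoints hL
  have hgaps_nonneg : ∀ d ∈ (sortedSegPoints L S).consecutivePairs.map (fun p => p.2 - p.1),
      0 ≤ d := by
    simp only [List.mem_map]
    rintro _ ⟨p, hp, rfl⟩
    exact sub_nonneg.mpr (pairwise_sortedSegPoints.rel_of_mem_consecutivePairs hp)
  exact List.mem_map.mp
    (List.foldr_max_mem (List.ne_nil_of_mem (List.mem_map_of_mem hq)) hgaps_nonneg)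

theorem largestGap_nonneg (hL : 0 < L) : 0 ≤ largestGap L S := by
  obtain ⟨p, hp, hpG⟩ := exists_mem_consecutivePairs_sub_eq_largestGap (S := S) hL
  exact hpG ▸ sub_nonneg.mpr (pairwise_sortedSegPoints.rel_of_mem_consecutivePairs hp)

end SegmentPoints

/-- Let `L > 0` and let `S` be a finite subset of `[0, L]`.  The minimum of `x + (L − y)`
over all pairs `(x, y) ∈ [0, L] × [0, L]` such that every `s ∈ S` satisfies `s ≤ x` or
`y ≤ s`, exists and equals `L − G`, where `G` is the largest gap between consecutive
elements of the sorted list of `S ∪ {0, L}`. -/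
theorem largest_gap_configuration (L : ℝ) (hL : 0 < L) (S : Finset ℝ)
    (hS : ∀ s ∈ S, s ∈ Set.Icc (0 : ℝ) L) :
    IsLeast {z : ℝ | ∃ x y : ℝ, x ∈ Set.Icc (0 : ℝ) L ∧ y ∈ Set.Icc (0 : ℝ) L ∧
        (∀ s ∈ S, s ≤ x ∨ y ≤ s) ∧ z = x + (L - y)}
      (L - largestGap L S) := by
  have hIcc := mem_Icc_of_mem_sortedSegPoints hL.le hS
  obtain ⟨p, hp, hpG⟩ := exists_mem_consecutivePairs_sub_eq_largestGap (S := S) hL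
  constructor
  · refine ⟨p.1, p.2, hIcc _ (List.fst_mem_of_mem_consecutivePairs hp),
      hIcc _ (List.snd_mem_of_mem_consecutivePairs hp), fun s hs => ?_, by linarith⟩
    exact pairwise_sortedSegPoints.le_or_le_of_mem_consecutivePairs hp
      (mem_sortedSegPoints.mpr (.inr (.inr hs)))
  · rintro _ ⟨x, y, hx, hy, hcover, rfl⟩
    rcases le_or_gt y x with hyx | hxy
    · linarith [largestGap_nonneg (S := S) hL]
    obtain ⟨q, hq, hqx, hxq⟩ := pairwise_sortedSegPoints.exists_mem_consecutivePairs_le_lt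
      zero_mem_sortedSegPoints hx.1 self_mem_sortedSegPoints (hxy.trans_le hy.2)
    have hyq : y ≤ q.2 := by
      rcases mem_sortedSegPoints.mp (List.snd_mem_of_mem_consecutivePairs hq) with h | h | h
      · linarith [hx.1]
      · linarith [hy.2]
      · exact (hcover _ h).resolve_left hxq.not_ge
    linarith [sub_le_largestGap hq]
end

section
/- Let d be a real number and S a finite set of real numbers. Then the minimum, over all finite lists x₀, x₁, …, x_N of real numbers with x₀ = x_N = d whose set of entries contains S, of the total variation ∑_{r=0}^{N−1} |x_{r+1} − x_r|, exists and equals 2·(max(S ∪ {d}) − min(S ∪ {d})). In particular, every such list has total variation at least 2·(max(S ∪ {d}) − min(S ∪ {d})), and some such list attains this value. -/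
/-!
Dropping points from a list never increases its total variation, by the triangle inequality.
A tour that starts and ends at `d` and visits the extreme points `M = max (S ∪ {d})` and
`m = min (S ∪ {d})` in some order is therefore at least as long as the triangle
`d → M → m → d`, whose length is `2 (M - m)` because `m ≤ d ≤ M`. The sweep
`d → m → … → M → d` through the sorted points attains this length.
-/

/-- The total variation `∑ r, |x_{r+1} − x_r|` of a list `x₀, x₁, …, x_N` of reals. -/
def listTotalVariation (l : List ℝ) : ℝ :=
  ((l.zip l.tail).map (fun p => |p.2 - p.1|)).sum

open scoped List

@[simp]
lemma listTotalVariation_singleton (a : ℝ) : listTotalVariation [a] = 0 := rfl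

@[simp]
lemma listTotalVariation_cons_cons (a b : ℝ) (l : List ℝ) :
    listTotalVariation (a :: b :: l) = |b - a| + listTotalVariation (b :: l) := by
  simp [listTotalVariation]

lemma listTotalVariation_cons_of_head?_eq {l : List ℝ} {b : ℝ} (h : l.head? = some b) (a : ℝ) :
    listTotalVariation (a :: l) = |b - a| + listTotalVariation l := by
  obtain ⟨t, rfl⟩ := List.head?_eq_some_iff.mp h
  simp

lemma listTotalVariation_append_singleton_of_getLast?_eq {l : List ℝ} {b : ℝ}
    (h : l.getLast? = some b) (a : ℝ) :
    listTotalVariation (l ++ [a]) = listTotalVariation l + |a - b| := by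
  induction l with
  | nil => simp at h
  | cons x t ih =>
    cases t with
    | nil => simp_all
    | cons y s =>
      rw [List.getLast?_cons_cons] at h
      simp only [List.cons_append, listTotalVariation_cons_cons] at ih ⊢
      rw [ih h]
      ring

lemma listTotalVariation_cons_le_cons_cons (a b : ℝ) (l : List ℝ) :
    listTotalVariation (a :: l) ≤ listTotalVariation (b :: l) + |b - a| := by
  cases l with
  | nil => simp
  | cons c t =>
    simp only [listTotalVariation_cons_cons]
    linarith [abs_sub_le c b a]

lemma List.Sublist.listTotalVariation_cons_le {l₁ l₂ : List ℝ} (h : l₁ <+ l₂) (a : ℝ) :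
    listTotalVariation (a :: l₁) ≤ listTotalVariation (a :: l₂) := by
  induction h generalizing a with
  | slnil => rfl
  | @cons l₁ _ b _ ih =>
    rw [listTotalVariation_cons_cons]
    linarith [ih b, listTotalVariation_cons_le_cons_cons a b l₁]
  | cons_cons b _ ih =>
    simp only [listTotalVariation_cons_cons]
    linarith [ih b]

lemma List.pair_sublist_or_pair_sublist_or_eq {α : Type*} {l : List α} {a b : α}
    (ha : a ∈ l) (hb : b ∈ l) : [a, b] <+ l ∨ [b, a] <+ l ∨ a = b := by
  obtain ⟨s, t, rfl⟩ := List.append_of_mem ha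
  rcases List.mem_append.mp hb with hbs | hbt
  · exact Or.inr (Or.inl ((List.singleton_sublist.mpr hbs).append (by simp)))
  · rcases List.mem_cons.mp hbt with rfl | hbt
    · exact Or.inr (Or.inr rfl)
    · exact Or.inl ((List.singleton_sublist.mpr hbt).cons_cons a |>.trans (by simp))

lemma perimeter_le_listTotalVariation {l : List ℝ} {a b d : ℝ}
    (hhead : l.head? = some d) (hlast : l.getLast? = some d) (ha : a ∈ l) (hb : b ∈ l) :
    |a - d| + |b - a| + |d - b| ≤ listTotalVariation l := by
  -- Padding with the endpoints adds only zero-length steps, and exposes `[d, a, b, d]` as a sublist.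
  have hpad : listTotalVariation (d :: (l ++ [d])) = listTotalVariation l := by
    rw [listTotalVariation_cons_of_head?_eq (by rw [List.head?_append, hhead]; rfl),
      listTotalVariation_append_singleton_of_getLast?_eq hlast]
    simp
  rw [← hpad]
  rcases List.pair_sublist_or_pair_sublist_or_eq ha hb with hab | hba | rfl
  · simpa [add_assoc] using (hab.append_right [d]).listTotalVariation_cons_le d
  · have := (hba.append_right [d]).listTotalVariation_cons_le d
    simp only [List.cons_append, List.nil_append, listTotalVariation_cons_cons,
      listTotalVariation_singleton] at this
    linarith [abs_sub_comm a b, abs_sub_comm a d, abs_sub_comm b d]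
  · simpa using ((List.singleton_sublist.mpr ha).append_right [d]).listTotalVariation_cons_le d

lemma listTotalVariation_eq_sub_of_isChain_le {l : List ℝ} {a b : ℝ}
    (hchain : l.IsChain (· ≤ ·)) (hhead : l.head? = some a) (hlast : l.getLast? = some b) :
    listTotalVariation l = b - a := by
  induction l generalizing a with
  | nil => simp at hhead
  | cons x t ih =>
    obtain rfl : x = a := by simpa using hhead
    cases t with
    | nil =>
      obtain rfl : x = b := by simpa using hlast
      simp
    | cons y s =>
      rw [List.isChain_cons_cons] at hchain
      rw [List.getLast?_cons_cons] at hlast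
      rw [listTotalVariation_cons_cons, ih hchain.2 rfl hlast,
        abs_of_nonneg (sub_nonneg.mpr hchain.1)]
      ring

lemma Finset.head?_sort {α : Type*} [LinearOrder α] {s : Finset α} (hs : s.Nonempty) :
    (s.sort (· ≤ ·)).head? = some (s.min' hs) := by
  rw [List.head?_eq_getElem?, List.getElem?_eq_getElem (by simpa using hs.card_pos),
    Finset.sorted_zero_eq_min']

lemma Finset.getLast?_sort {α : Type*} [LinearOrder α] {s : Finset α} (hs : s.Nonempty) :
    (s.sort (· ≤ ·)).getLast? = some (s.max' hs) := by
  rw [List.getLast?_eq_getElem?, List.getElem?_eq_getElem (by simpa using hs.card_pos),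
    Finset.sorted_last_eq_max']

lemma listTotalVariation_cons_sort_append {s : Finset ℝ} (hs : s.Nonempty) {d : ℝ}
    (hmin : s.min' hs ≤ d) (hmax : d ≤ s.max' hs) :
    listTotalVariation (d :: (s.sort ++ [d])) = 2 * (s.max' hs - s.min' hs) := by
  rw [listTotalVariation_cons_of_head?_eq (by rw [List.head?_append, Finset.head?_sort hs]; rfl),
    listTotalVariation_append_singleton_of_getLast?_eq (Finset.getLast?_sort hs),
    listTotalVariation_eq_sub_of_isChain_le (s.pairwise_sort _).isChain
      (Finset.head?_sort hs) (Finset.getLast?_sort hs),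
    abs_of_nonpos (by linarith), abs_of_nonpos (by linarith)]
  ring

/-- Let `d` be a real number and `S` a finite set of reals.  The minimum, over all finite
lists `x₀, …, x_N` of reals with `x₀ = x_N = d` whose set of entries contains `S`, of the
total variation `∑ r, |x_{r+1} − x_r|`, exists and equals
`2 · (max (S ∪ {d}) − min (S ∪ {d}))`. -/
theorem single_aisle_tour_length (d : ℝ) (S : Finset ℝ) :
    IsLeast {z : ℝ | ∃ l : List ℝ, l ≠ [] ∧ l.head? = some d ∧ l.getLast? = some d ∧
        (∀ s ∈ S, s ∈ l) ∧ z = listTotalVariation l}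
      (2 * ((insert d S).max' (Finset.insert_nonempty d S) -
            (insert d S).min' (Finset.insert_nonempty d S))) := by
  set T := insert d S
  have hT : T.Nonempty := Finset.insert_nonempty d S
  have hdT : d ∈ T := Finset.mem_insert_self d S
  have hdM : d ≤ T.max' hT := T.le_max' d hdT
  have hmd : T.min' hT ≤ d := T.min'_le d hdT
  constructor
  · refine ⟨d :: (T.sort ++ [d]), by simp, rfl, by rw [← List.cons_append, List.getLast?_concat],
      fun s hs => by simp [T, hs], (listTotalVariation_cons_sort_append hT hmd hdM).symm⟩
  · rintro _ ⟨l, -, hhead, hlast, hS, rfl⟩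
    have hT_sub : ∀ x ∈ T, x ∈ l := by
      intro x hx
      rcases Finset.mem_insert.mp hx with rfl | hx
      · exact List.mem_of_mem_head? hhead
      · exact hS x hx
    have hperimeter := perimeter_le_listTotalVariation hhead hlast
      (hT_sub _ (T.max'_mem hT)) (hT_sub _ (T.min'_mem hT))
    rw [abs_of_nonneg (by linarith), abs_of_nonpos (by linarith [T.min'_le_max' hT]),
      abs_of_nonneg (by linarith)] at hperimeter
    linarith
end

section
/- Fix a rectangular warehouse graph as defined in the context. For every tour subgraph c and every aisle index i with 1 ≤ i < m, the sum over j of the multiplicity that c assigns to the horizontal edge between v_{i,j} and v_{i+1,j} is even. -/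
structure Warehouse where
  m : ℕ
  n : ℕ
  hm : 1 ≤ m
  hn : 2 ≤ n
  w : ℝ
  h : ℝ
  hw : 0 < w
  hh : 0 < h
  items : Fin m → Fin (n - 1) → Finset ℝ
  items_mem : ∀ i j, ∀ t ∈ items i j,
    ((j : ℕ) : ℝ) * h < t ∧ t < (((j : ℕ) : ℝ) + 1) * h
  depot : Fin m × Fin n

namespace Warehouse

variable (W : Warehouse)

abbrev CrossV := Fin W.m × Fin W.n
abbrev ItemV := Σ i : Fin W.m, Σ j : Fin (W.n - 1), {t : ℝ // t ∈ W.items i j}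
abbrev Vertex := W.CrossV ⊕ W.ItemV
abbrev VEdge := Σ i : Fin W.m, Σ j : Fin (W.n - 1), Fin ((W.items i j).card + 1)
abbrev HEdge := Fin (W.m - 1) × Fin W.n
abbrev Edge := W.VEdge ⊕ W.HEdge

/-- The heights of the vertices of subaisle `j` of aisle `i`, sorted increasingly:
the two bounding cross-aisle heights `j·h` and `(j+1)·h` together with the item heights. -/
noncomputable def pts (i : Fin W.m) (j : Fin (W.n - 1)) : List ℝ :=
  (insert (((j : ℕ) : ℝ) * W.h) (insert ((((j : ℕ) : ℝ) + 1) * W.h) (W.items i j))).sort (· ≤ ·)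

/-- The height of the lower endpoint of a vertical edge. -/
noncomputable def lo (e : W.VEdge) : ℝ := (W.pts e.1 e.2.1).getD e.2.2 0

/-- The height of the upper endpoint of a vertical edge. -/
noncomputable def hi (e : W.VEdge) : ℝ := (W.pts e.1 e.2.1).getD (e.2.2 + 1) 0

/-- The vertex of subaisle `j` of aisle `i` located at height `t`. -/
noncomputable def vtxAt (i : Fin W.m) (j : Fin (W.n - 1)) (t : ℝ) : W.Vertex :=
  if ht : t ∈ W.items i j then Sum.inr ⟨i, j, t, ht⟩
  else if t = (((j : ℕ) : ℝ) + 1) * W.h then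
    Sum.inl (i, ⟨j.val + 1, by have := j.isLt; omega⟩)
  else Sum.inl (i, ⟨j.val, by have := j.isLt; omega⟩)

/-- The pair of endpoints of an edge. -/
noncomputable def ends : W.Edge → W.Vertex × W.Vertex
  | Sum.inl e => (W.vtxAt e.1 e.2.1 (W.lo e), W.vtxAt e.1 e.2.1 (W.hi e))
  | Sum.inr (a, j) =>
      (Sum.inl (⟨a.val, by have := a.isLt; omega⟩, j),
       Sum.inl (⟨a.val + 1, by have := a.isLt; omega⟩, j))

/-- The length of an edge. -/
noncomputable def len : W.Edge → ℝ
  | Sum.inl e => W.hi e - W.lo e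
  | Sum.inr _ => W.w

/-- The degree of a vertex with respect to an edge-multiplicity function `c`:
the sum of the multiplicities of the incident edges (counted twice for loops). -/
noncomputable def deg (c : W.Edge → ℕ) (v : W.Vertex) : ℕ :=
  ∑ e : W.Edge, c e *
    ((if (W.ends e).1 = v then 1 else 0) + (if (W.ends e).2 = v then 1 else 0))

/-- The vertices incident to an edge of positive multiplicity. -/
def support (c : W.Edge → ℕ) : Set W.Vertex :=
  {v | ∃ e : W.Edge, 0 < c e ∧ ((W.ends e).1 = v ∨ (W.ends e).2 = v)}

/-- The simple graph formed by the edges of positive multiplicity. -/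
noncomputable def supportGraph (c : W.Edge → ℕ) : SimpleGraph W.Vertex :=
  SimpleGraph.fromRel (fun u v => ∃ e : W.Edge, 0 < c e ∧ W.ends e = (u, v))

/-- The set `P` consisting of the depot together with all item vertices. -/
def Pset : Set W.Vertex :=
  insert (Sum.inl W.depot) (Set.range Sum.inr)

/-- A tour subgraph: an edge-multiplicity function such that the subgraph formed by the
edges of positive multiplicity contains every vertex of `P`, is connected, and every
vertex has even total degree. -/
def IsTourSubgraph (c : W.Edge → ℕ) : Prop :=
  W.Pset ⊆ W.support c ∧
  ((W.supportGraph c).induce (W.support c)).Connected ∧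
  ∀ v : W.Vertex, Even (W.deg c v)

/-- The total length of a tour subgraph. -/
noncomputable def tourLength (c : W.Edge → ℕ) : ℝ :=
  ∑ e : W.Edge, (c e : ℝ) * W.len e

/-- A minimal tour subgraph: a tour subgraph of minimum total length. -/
def IsMinimalTour (c : W.Edge → ℕ) : Prop :=
  W.IsTourSubgraph c ∧ ∀ c' : W.Edge → ℕ, W.IsTourSubgraph c' → W.tourLength c ≤ W.tourLength c'

end Warehouse

/-!
Colour the vertices of the aisles up to `a` by `1` and all other vertices by `0` in `ZMod 2`.
Summing colour times degree over all vertices gives `0`, since every degree is even;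
regrouped by edges it counts each edge with multiplicity times the sum of the colours
of its endpoints. Vertical edges stay inside one aisle and contribute `0`, and the only
horizontal edges with differently coloured endpoints are those between aisles `a` and `a + 1`.
-/

open Finset

section EdgeCut

variable {V E : Type*} [Fintype V] [Fintype E] [DecidableEq V]

def incidenceDegree (ends : E → V × V) (c : E → ℕ) (v : V) : ℕ :=
  ∑ e, c e * ((if (ends e).1 = v then 1 else 0) + (if (ends e).2 = v then 1 else 0))

theorem sum_mul_incidenceDegree {R : Type*} [CommSemiring R] (ends : E → V × V) (c : E → ℕ)
    (χ : V → R) :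
    ∑ v, χ v * (incidenceDegree ends c v : R) = ∑ e, (c e : R) * (χ (ends e).1 + χ (ends e).2) := by
  simp only [incidenceDegree, Nat.cast_sum, Nat.cast_mul, Nat.cast_add, Nat.cast_ite,
    Nat.cast_one, Nat.cast_zero, mul_sum]
  rw [sum_comm]
  refine sum_congr rfl fun e _ => ?_
  simp only [mul_add, sum_add_distrib, mul_ite, mul_one, mul_zero, sum_ite_eq, mem_univ,
    if_true]
  ring

theorem sum_mul_add_eq_zero_of_even_incidenceDegree (ends : E → V × V) (c : E → ℕ)
    (hc : ∀ v, Even (incidenceDegree ends c v)) (χ : V → ZMod 2) :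
    ∑ e, (c e : ZMod 2) * (χ (ends e).1 + χ (ends e).2) = 0 := by
  rw [← sum_mul_incidenceDegree]
  exact sum_eq_zero fun v _ => by rw [ZMod.natCast_eq_zero_iff_even.2 (hc v), mul_zero]

end EdgeCut

namespace Warehouse

variable (W : Warehouse)

theorem deg_eq_incidenceDegree (c : W.Edge → ℕ) : W.deg c = incidenceDegree W.ends c := rfl

def aisleOf : W.Vertex → ℕ
  | Sum.inl p => p.1.val
  | Sum.inr s => s.1.val

theorem aisleOf_vtxAt (i : Fin W.m) (j : Fin (W.n - 1)) (t : ℝ) :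
    W.aisleOf (W.vtxAt i j t) = i.val := by
  unfold vtxAt
  split_ifs <;> rfl

def leftOf (a : ℕ) (v : W.Vertex) : ZMod 2 := if W.aisleOf v ≤ a then 1 else 0

theorem leftOf_ends_vertical (a : ℕ) (e : W.VEdge) :
    W.leftOf a (W.ends (.inl e)).1 + W.leftOf a (W.ends (.inl e)).2 = 0 := by
  simp only [ends, leftOf, aisleOf_vtxAt]
  exact CharTwo.add_self_eq_zero _

theorem leftOf_ends_horizontal (a b : Fin (W.m - 1)) (j : Fin W.n) :
    W.leftOf a (W.ends (.inr (b, j))).1 + W.leftOf a (W.ends (.inr (b, j))).2 =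
      if b = a then 1 else 0 := by
  change (if b.val ≤ a.val then (1 : ZMod 2) else 0) + (if b.val + 1 ≤ a.val then 1 else 0) = _
  split_ifs <;> first | omega | decide

end Warehouse

/-- For every tour subgraph `c` of a rectangular warehouse graph and every pair of adjacent
aisles `a, a+1`, the sum over the cross-aisles `j` of the multiplicities that `c` assigns to
the horizontal edges between `v_{a,j}` and `v_{a+1,j}` is even. -/
theorem warehouse_horizontal_cut_even (W : Warehouse) (c : W.Edge → ℕ)
    (hc : W.IsTourSubgraph c) (a : Fin (W.m - 1)) :
    Even (∑ j : Fin W.n, c (Sum.inr (a, j))) := by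
  have hcut := sum_mul_add_eq_zero_of_even_incidenceDegree W.ends c
    (by simpa only [W.deg_eq_incidenceDegree] using hc.2.2) (W.leftOf a)
  rw [Fintype.sum_sum_type, Fintype.sum_prod_type] at hcut
  simp only [W.leftOf_ends_vertical, W.leftOf_ends_horizontal, mul_zero, sum_const_zero,
    zero_add, mul_ite, mul_one] at hcut
  rw [sum_comm] at hcut
  simp only [sum_ite_eq', mem_univ, if_true] at hcut
  exact ZMod.natCast_eq_zero_iff_even.1 (by exact_mod_cast hcut)
end
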